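/- arXiv:1805.04148 — 2 statements merged into one kernel-verified Lean document; each statement's English description precedes it below -/
import Mathlib

section
/- Let (m_k)_{1≤k≤n} be positive integers with m_{k+1}/m_k ≥ 2 for all k. Then the Walsh functions W_{m_1}, …, W_{m_n}, viewed as random variables on [0,1] with Lebesgue measure, are mutually independent, each taking values ±1 with probability 1/2. -/
/-!
A family of `±1`-valued random variables `X i` is independent, with `P(X i = 1) = 1/2`, as soon
as every product over a nonempty finite set of indices has mean zero: the indicator of
`⋂ i ∈ S, {X i = 1}` is `∏ i ∈ S, (1 + X i) / 2`, and expanding the product leaves only the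
constant term `2 ^ (-#S)` after integration.

Walsh functions multiply by XOR of their indices, and the gap condition `2 m k ≤ m (k + 1)` makes
the leading bit of the largest index survive in the XOR of any nonempty subfamily, so every such
product is `W k` with `k ≠ 0`. Finally `∫₀¹ W k = 0`: `W k` is `1`-periodic, and translation by
`2 ^ (-(j + 1))`, where `j` is the lowest set bit of `k`, flips the sign of `r j` and fixes every
`r i` with `i > j`.
-/

open MeasureTheory ProbabilityTheory

/-- The base Rademacher function: `1` on `[0, 1/2)`, `-1` on `[1/2, 1)`, extended 1-periodically. -/
noncomputable def r0 (x : ℝ) : ℝ := if Int.fract x < 1 / 2 then 1 else -1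

/-- The `n`-th Rademacher function `r_n(x) = r_0(2^n x)`. -/
noncomputable def rademacher (n : ℕ) (x : ℝ) : ℝ := r0 (2 ^ n * x)

/-- The `n`-th Walsh function `W_n(x) = ∏_i r_i(x)^{k_i}` where `n = ∑ k_i 2^i`. -/
noncomputable def walsh (n : ℕ) (x : ℝ) : ℝ :=
  ∏ i ∈ Finset.range (n + 1), if n.testBit i then rademacher i x else 1

section SignVariables

variable {Ω ι : Type*} {X : ι → Ω → ℝ}

lemma indicator_biInter_preimage_one_eq_prod (hX : ∀ i ω, X i ω = 1 ∨ X i ω = -1)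
    (S : Finset ι) (ω : Ω) :
    (⋂ i ∈ S, X i ⁻¹' {1}).indicator 1 ω = ∏ i ∈ S, (1 + X i ω) / 2 := by
  by_cases h : ω ∈ ⋂ i ∈ S, X i ⁻¹' {1}
  · rw [Set.indicator_of_mem h, Pi.one_apply]
    simp only [Set.mem_iInter, Set.mem_preimage, Set.mem_singleton_iff] at h
    exact (Finset.prod_eq_one fun i hi => by rw [h i hi]; norm_num).symm
  · rw [Set.indicator_of_notMem h]
    simp only [Set.mem_iInter, Set.mem_preimage, Set.mem_singleton_iff, not_forall] at h
    obtain ⟨i, hi, hne⟩ := h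
    exact (Finset.prod_eq_zero hi (by rw [(hX i ω).resolve_left hne]; norm_num)).symm

variable [MeasurableSpace Ω] {μ : Measure Ω}

lemma integrable_prod_of_eq_one_or_eq_neg_one [IsFiniteMeasure μ]
    (hmeas : ∀ i, Measurable (X i)) (hX : ∀ i ω, X i ω = 1 ∨ X i ω = -1) (T : Finset ι) :
    Integrable (fun ω => ∏ i ∈ T, X i ω) μ := by
  refine Integrable.of_bound (Finset.measurable_prod T fun i _ => hmeas i).aestronglyMeasurable 1
    (Filter.Eventually.of_forall fun ω => ?_)
  rw [Real.norm_eq_abs, Finset.abs_prod]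
  exact (Finset.prod_eq_one fun i _ => by rcases hX i ω with h | h <;> simp [h]).le

variable [IsProbabilityMeasure μ] (hmeas : ∀ i, Measurable (X i))
  (hX : ∀ i ω, X i ω = 1 ∨ X i ω = -1)
  (horth : ∀ T : Finset ι, T.Nonempty → ∫ ω, ∏ i ∈ T, X i ω ∂μ = 0)
include hmeas hX horth

lemma measure_biInter_preimage_one_of_integral_prod_eq_zero (S : Finset ι) :
    μ (⋂ i ∈ S, X i ⁻¹' {1}) = (1 / 2) ^ S.card := by
  classical
  have hS : MeasurableSet (⋂ i ∈ S, X i ⁻¹' {1}) :=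
    Finset.measurableSet_biInter S fun i _ => hmeas i (measurableSet_singleton 1)
  have hexpand : ∀ ω, ∏ i ∈ S, (1 + X i ω) / 2
      = (1 / 2) ^ S.card * ∑ T ∈ S.powerset, ∏ i ∈ T, X i ω := by
    intro ω
    rw [Finset.prod_div_distrib, Finset.prod_one_add, Finset.prod_const, div_eq_mul_inv,
      mul_comm, one_div, inv_pow]
  have hreal : μ.real (⋂ i ∈ S, X i ⁻¹' {1}) = (1 / 2) ^ S.card := by
    rw [← integral_indicator_one hS]
    simp_rw [indicator_biInter_preimage_one_eq_prod hX, hexpand]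
    rw [integral_const_mul,
      integral_finsetSum _ fun T _ => integrable_prod_of_eq_one_or_eq_neg_one hmeas hX T,
      Finset.sum_eq_single_of_mem ∅ (Finset.empty_mem_powerset S)
        fun T _ hT => horth T (Finset.nonempty_iff_ne_empty.2 hT)]
    simp
  rw [← ENNReal.toReal_eq_toReal_iff' (measure_ne_top μ _) (by simp), ← measureReal_def, hreal]
  simp

lemma measure_preimage_one_of_integral_prod_eq_zero (i : ι) : μ (X i ⁻¹' {1}) = 1 / 2 := by
  simpa using measure_biInter_preimage_one_of_integral_prod_eq_zero hmeas hX horth {i}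

lemma measure_preimage_neg_one_of_integral_prod_eq_zero (i : ι) :
    μ (X i ⁻¹' {-1}) = 1 / 2 := by
  have hcompl : X i ⁻¹' {-1} = (X i ⁻¹' {1})ᶜ := by
    ext ω
    rcases hX i ω with h | h <;> norm_num [h]
  rw [hcompl, prob_compl_eq_one_sub (hmeas i (measurableSet_singleton 1)),
    measure_preimage_one_of_integral_prod_eq_zero hmeas hX horth, one_div, ENNReal.one_sub_inv_two]

theorem iIndepFun_of_integral_prod_eq_zero : iIndepFun X μ := by
  have hsets : iIndepSet (fun i => X i ⁻¹' {1}) μ :=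
    (iIndepSet_iff_meas_biInter fun i => hmeas i (measurableSet_singleton 1)).2 fun S => by
      simp only [measure_biInter_preimage_one_of_integral_prod_eq_zero hmeas hX horth,
        measure_preimage_one_of_integral_prod_eq_zero hmeas hX horth, Finset.prod_const]
  have hX_eq : X = fun i => (fun t : ℝ => 2 * t - 1) ∘ (X i ⁻¹' {1}).indicator 1 := by
    ext i ω
    rcases hX i ω with h | h <;> norm_num [Set.indicator, h]
  rw [hX_eq]
  exact hsets.iIndepFun_indicator.comp _ fun _ => by fun_prop

end SignVariables

lemma r0_add_natCast (y : ℝ) (k : ℕ) : r0 (y + k) = r0 y := by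
  simp only [r0, Int.fract_add_natCast]

lemma r0_add_half (y : ℝ) : r0 (y + 1 / 2) = -r0 y := by
  have h0 := Int.fract_nonneg y
  have h1 := Int.fract_lt_one y
  unfold r0
  by_cases hy : Int.fract y < 1 / 2
  · have : Int.fract (y + 1 / 2) = Int.fract y + 1 / 2 :=
      Int.fract_eq_iff.2 ⟨by linarith, by linarith, ⌊y⌋, by rw [← Int.self_sub_fract y]; ring⟩
    rw [this, if_pos hy, if_neg (by linarith)]
  · have : Int.fract (y + 1 / 2) = Int.fract y - 1 / 2 :=
      Int.fract_eq_iff.2 ⟨by linarith, by linarith, ⌊y⌋ + 1, by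
        push_cast; rw [← Int.self_sub_fract y]; ring⟩
    rw [this, if_neg hy, if_pos (by linarith), neg_neg]

lemma r0_eq_one_or_eq_neg_one (x : ℝ) : r0 x = 1 ∨ r0 x = -1 := by
  unfold r0; split_ifs <;> simp

lemma measurable_rademacher (i : ℕ) : Measurable (rademacher i) :=
  (Measurable.ite (measurableSet_lt measurable_fract measurable_const) measurable_const
    measurable_const).comp (measurable_const_mul _)

lemma rademacher_mul_self (i : ℕ) (x : ℝ) : rademacher i x * rademacher i x = 1 := by
  rcases r0_eq_one_or_eq_neg_one (2 ^ i * x) with h | h <;> simp [rademacher, h]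

lemma rademacher_add_of_two_pow_mul_eq_natCast {i : ℕ} {h : ℝ} {k : ℕ} (hk : 2 ^ i * h = k)
    (x : ℝ) : rademacher i (x + h) = rademacher i x := by
  rw [rademacher, rademacher, mul_add, hk, r0_add_natCast]

lemma rademacher_add_inv_two_pow_succ (j : ℕ) (x : ℝ) :
    rademacher j (x + (2 ^ (j + 1))⁻¹) = -rademacher j x := by
  have : (2 : ℝ) ^ j * (2 ^ (j + 1))⁻¹ = 1 / 2 := by
    rw [pow_succ]; field_simp
  rw [rademacher, rademacher, mul_add, this, r0_add_half]

lemma walsh_eq_one_or_eq_neg_one (n : ℕ) (x : ℝ) : walsh n x = 1 ∨ walsh n x = -1 := by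
  refine Finset.prod_induction _ (fun y => y = 1 ∨ y = -1) ?_ (Or.inl rfl) fun i _ => ?_
  · rintro a b (rfl | rfl) (rfl | rfl) <;> norm_num
  · split_ifs
    · exact r0_eq_one_or_eq_neg_one _
    · exact Or.inl rfl

lemma measurable_walsh (n : ℕ) : Measurable (walsh n) :=
  Finset.measurable_prod _ fun i _ => by
    split_ifs
    exacts [measurable_rademacher i, measurable_const]

lemma walsh_zero : walsh 0 = 1 := by
  ext x; simp [walsh]

lemma walsh_eq_prod_range {n N : ℕ} (hN : n < N) (x : ℝ) :
    walsh n x = ∏ i ∈ Finset.range N, if n.testBit i then rademacher i x else 1 := by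
  refine Finset.prod_subset (Finset.range_subset_range.2 hN) fun i _ hi => ?_
  have : n < 2 ^ i :=
    Nat.lt_two_pow_self.trans_le (Nat.pow_le_pow_right two_pos (by simp at hi; omega))
  rw [Nat.testBit_lt_two_pow this, if_neg Bool.false_ne_true]

lemma walsh_mul_walsh (a b : ℕ) (x : ℝ) : walsh a x * walsh b x = walsh (a ^^^ b) x := by
  set N := a + b + (a ^^^ b) + 1
  rw [walsh_eq_prod_range (N := N) (by omega), walsh_eq_prod_range (N := N) (by omega),
    walsh_eq_prod_range (N := N) (by omega), ← Finset.prod_mul_distrib]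
  refine Finset.prod_congr rfl fun i _ => ?_
  rw [Nat.testBit_xor]
  cases a.testBit i <;> cases b.testBit i <;> simp [rademacher_mul_self]

lemma walsh_periodic (n : ℕ) : Function.Periodic (walsh n) 1 := fun x =>
  Finset.prod_congr rfl fun i _ => by
    rw [rademacher_add_of_two_pow_mul_eq_natCast (k := 2 ^ i) (by simp)]

lemma walsh_antiperiodic {n j : ℕ} (hj : n.testBit j) (hlow : ∀ i < j, n.testBit i = false) :
    Function.Antiperiodic (walsh n) (2 ^ (j + 1))⁻¹ := by
  intro x
  have hjn : j ∈ Finset.range (n + 1) :=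
    Finset.mem_range.2 (Nat.lt_two_pow_self.trans_le (Nat.ge_two_pow_of_testBit hj) |>.trans_le
      (Nat.le_succ n))
  have hfactor : ∀ i, (if n.testBit i then rademacher i (x + (2 ^ (j + 1))⁻¹) else 1)
      = (if i = j then -1 else 1) * (if n.testBit i then rademacher i x else 1) := by
    intro i
    rcases lt_trichotomy i j with hij | rfl | hji
    · simp [hlow i hij, hij.ne]
    · simp [hj, rademacher_add_inv_two_pow_succ]
    · obtain ⟨k, rfl⟩ := Nat.exists_eq_add_of_lt hji
      rw [rademacher_add_of_two_pow_mul_eq_natCast (k := 2 ^ k), if_neg hji.ne', one_mul]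
      push_cast
      rw [show j + k + 1 = k + (j + 1) by ring, pow_add]
      field_simp
  simp only [walsh, hfactor, Finset.prod_mul_distrib, Finset.prod_ite_eq', if_pos hjn, neg_one_mul]

lemma integral_walsh_eq_zero {n : ℕ} (hn : n ≠ 0) : ∫ x in (0 : ℝ)..1, walsh n x = 0 := by
  classical
  have hbit : ∃ j, n.testBit j := by
    obtain ⟨j, hj, -⟩ := Nat.exists_most_significant_bit hn
    exact ⟨j, hj⟩
  set h : ℝ := (2 ^ (Nat.find hbit + 1))⁻¹
  have hanti : Function.Antiperiodic (walsh n) h :=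
    walsh_antiperiodic (Nat.find_spec hbit) fun i hi => by simpa using Nat.find_min hbit hi
  have hshift : ∫ x in (0 : ℝ)..1, walsh n x = ∫ x in (0 : ℝ)..1, walsh n (x + h) := by
    rw [intervalIntegral.integral_comp_add_right, zero_add, add_comm 1 h,
      (walsh_periodic n).intervalIntegral_add_eq h 0, zero_add]
  simp only [show ∀ x, walsh n (x + h) = -walsh n x from hanti,
    intervalIntegral.integral_neg] at hshift
  linarith

lemma setIntegral_Icc_walsh_eq_zero {n : ℕ} (hn : n ≠ 0) :
    ∫ x in Set.Icc (0 : ℝ) 1, walsh n x = 0 := by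
  rw [integral_Icc_eq_integral_Ioc, ← intervalIntegral.integral_of_le zero_le_one,
    integral_walsh_eq_zero hn]

def xorSum {ι : Type*} (M : ι → ℕ) (T : Finset ι) : ℕ := T.fold (· ^^^ ·) 0 M

section XorSum

variable {ι : Type*} {M : ι → ℕ}

@[simp] lemma xorSum_empty : xorSum M ∅ = 0 := rfl

lemma xorSum_insert [DecidableEq ι] {T : Finset ι} {a : ι} (ha : a ∉ T) :
    xorSum M (insert a T) = M a ^^^ xorSum M T :=
  Finset.fold_insert ha

lemma xorSum_lt_two_pow [DecidableEq ι] {T : Finset ι} {k : ℕ} (h : ∀ i ∈ T, M i < 2 ^ k) :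
    xorSum M T < 2 ^ k := by
  induction T using Finset.induction_on with
  | empty => exact Nat.two_pow_pos k
  | insert a T ha ih =>
    rw [xorSum_insert ha]
    exact Nat.xor_lt_two_pow (h a (Finset.mem_insert_self a T))
      (ih fun i hi => h i (Finset.mem_insert_of_mem hi))

lemma xorSum_ne_zero [LinearOrder ι] (hpos : ∀ i, 0 < M i)
    (hlac : ∀ i j, i < j → 2 * M i ≤ M j) {T : Finset ι} (hT : T.Nonempty) :
    xorSum M T ≠ 0 := by
  set a := T.max' hT
  set k := (M a).log2
  have hrest : xorSum M (T.erase a) < 2 ^ k := by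
    refine xorSum_lt_two_pow fun i hi => ?_
    have h2 := hlac i a (lt_of_le_of_ne (T.le_max' i (Finset.mem_of_mem_erase hi))
      (Finset.ne_of_mem_erase hi))
    have := (Nat.log2_lt (hpos a).ne').1 (Nat.lt_succ_self k)
    rw [pow_succ] at this
    omega
  have hsplit : xorSum M T = M a ^^^ xorSum M (T.erase a) := by
    rw [← xorSum_insert (Finset.notMem_erase a T), Finset.insert_erase (T.max'_mem hT)]
  have hbit : (xorSum M T).testBit k := by
    rw [hsplit, Nat.testBit_xor, Nat.testBit_log2 (hpos a).ne', Nat.testBit_lt_two_pow hrest]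
    rfl
  intro h0
  simp [h0] at hbit

lemma prod_walsh_eq_walsh_xorSum [DecidableEq ι] (T : Finset ι) (x : ℝ) :
    ∏ i ∈ T, walsh (M i) x = walsh (xorSum M T) x := by
  induction T using Finset.induction_on with
  | empty => simp [walsh_zero]
  | insert a T ha ih => rw [Finset.prod_insert ha, ih, walsh_mul_walsh, xorSum_insert ha]

end XorSum

lemma two_mul_le_of_two_mul_le_succ {m : ℕ → ℕ} {a b : ℕ}
    (hstep : ∀ k, a ≤ k → k + 1 ≤ b → 2 * m k ≤ m (k + 1)) {i j : ℕ} (hai : a ≤ i)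
    (hij : i < j) (hjb : j ≤ b) : 2 * m i ≤ m j := by
  induction j, hij using Nat.le_induction with
  | base => exact hstep i hai hjb
  | succ j hij ih =>
    have := hstep j (by omega) hjb
    have := ih (by omega)
    omega

/-- If `m 1, …, m n` are positive integers with `m (k+1) / m k ≥ 2`, then the
Walsh functions `W_{m 1}, …, W_{m n}`, viewed as random variables on `[0,1]` with Lebesgue
measure, are mutually independent, each taking the values `1` and `-1` with probability `1/2`. -/
theorem walsh_iIndepFun (n : ℕ) (m : ℕ → ℕ)
    (hpos : ∀ k, 1 ≤ k → k ≤ n → 0 < m k)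
    (hlac : ∀ k, 1 ≤ k → k + 1 ≤ n → (m (k + 1) : ℝ) / (m k : ℝ) ≥ 2) :
    iIndepFun
      (fun i : Fin n => walsh (m (i.1 + 1)))
      ((volume : Measure ℝ).restrict (Set.Icc 0 1)) ∧
    ∀ i : Fin n,
      ((volume : Measure ℝ).restrict (Set.Icc 0 1)) {x | walsh (m (i.1 + 1)) x = 1} = 1 / 2 ∧
      ((volume : Measure ℝ).restrict (Set.Icc 0 1)) {x | walsh (m (i.1 + 1)) x = -1} = 1 / 2 := by
  have : IsProbabilityMeasure ((volume : Measure ℝ).restrict (Set.Icc 0 1)) := ⟨by simp⟩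
  have hstep : ∀ k, 1 ≤ k → k + 1 ≤ n → 2 * m k ≤ m (k + 1) := fun k hk hkn => by
    have hmk : (0 : ℝ) < m k := by exact_mod_cast hpos k hk (by omega)
    exact_mod_cast (le_div_iff₀ hmk).1 (hlac k hk hkn)
  have horth : ∀ T : Finset (Fin n), T.Nonempty →
      ∫ x in Set.Icc 0 1, ∏ i ∈ T, walsh (m (i.1 + 1)) x = 0 := fun T hT => by
    simp_rw [prod_walsh_eq_walsh_xorSum]
    refine setIntegral_Icc_walsh_eq_zero (xorSum_ne_zero (fun i => hpos _ (by omega) i.2)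
      (fun i j hij => two_mul_le_of_two_mul_le_succ hstep ?_ ?_ ?_) hT) <;> omega
  have hmeas := fun i : Fin n => measurable_walsh (m (i.1 + 1))
  have hsign := fun (i : Fin n) x => walsh_eq_one_or_eq_neg_one (m (i.1 + 1)) x
  exact ⟨iIndepFun_of_integral_prod_eq_zero hmeas hsign horth, fun i =>
    ⟨measure_preimage_one_of_integral_prod_eq_zero hmeas hsign horth i,
      measure_preimage_neg_one_of_integral_prod_eq_zero hmeas hsign horth i⟩⟩
end

section
/- Let q > 1 and let (m_k) be a sequence of positive integers with m_{k+1}/m_k ≥ q. Fix l ≥ 2 and A ∈ ℤ. If 1 ≤ k_l < ⋯ < k_1 and m_{k_1} ± m_{k_2} ± ⋯ ± m_{k_l} = A for some choice of signs, and additionally m_{k_1}/m_{k_2} > l, then m_{k_1}/l < A < 2 m_{k_1}; consequently, the number of possible values of m_{k_1} among solutions with m_{k_1}/m_{k_2} > l is at most log_q(2l) + 1. -/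
/-!
Splitting off the leading term, the remaining `l - 1` terms are each at most `m (k 1)` in absolute
value, and `(l - 1) · m (k 1) < (l - 1)/l · m (k 0)`; this puts `A` within `(1 - 1/l) · m (k 0)` of
`m (k 0)`. Hence every possible leading term lies in the window `(A/2, l·A)`, whose endpoints have
ratio `2l`, and a sequence growing at least by the factor `q` per step has at most
`log_q (2l) + 1` terms there.
-/

open Finset

lemma abs_sum_range_succ_sub_le {R : Type*} [CommRing R] [LinearOrder R] [IsStrictOrderedRing R]
    (f : ℕ → R) (n : ℕ) (c : R) (hf : ∀ i < n, |f (i + 1)| ≤ c) :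
    |∑ i ∈ range (n + 1), f i - f 0| ≤ n * c := by
  rw [sum_range_succ', add_sub_cancel_right]
  calc |∑ i ∈ range n, f (i + 1)|
      ≤ ∑ i ∈ range n, |f (i + 1)| := abs_sum_le_sum_abs _ _
    _ ≤ ∑ _i ∈ range n, c := sum_le_sum fun i hi => hf i (mem_range.mp hi)
    _ = n * c := by rw [sum_const, card_range, nsmul_eq_mul]

lemma div_lt_and_lt_two_mul_of_abs_sub_le {L M N A : ℝ} (hL : 1 < L) (hN : 0 ≤ N)
    (hA : |A - M| ≤ (L - 1) * N) (hNM : L * N < M) : M / L < A ∧ A < 2 * M := by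
  rw [abs_le] at hA
  constructor
  · rw [div_lt_iff₀ (by linarith)]
    nlinarith [mul_lt_mul_of_pos_left hNM (sub_pos.mpr hL)]
  · nlinarith

def IsLacunary (q : ℝ) (m : ℕ → ℕ) : Prop :=
  ∀ k, 1 ≤ k → (m (k + 1) : ℝ) / m k ≥ q

namespace IsLacunary

variable {q : ℝ} {m : ℕ → ℕ}

-- If `m k` vanished, the ratio `m (k + 1) / m k` would be the junk value `0`, below `q`.
lemma pos (hlac : IsLacunary q m) (hq : 1 < q) {k : ℕ} (hk : 1 ≤ k) : 0 < m k := by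
  refine Nat.pos_of_ne_zero fun h => ?_
  have := hlac k hk
  simp only [h, Nat.cast_zero, div_zero] at this
  linarith

lemma mul_le_succ (hlac : IsLacunary q m) (hq : 1 < q) {k : ℕ} (hk : 1 ≤ k) :
    q * m k ≤ m (k + 1) := by
  have hpos : (0 : ℝ) < m k := by exact_mod_cast hlac.pos hq hk
  exact (le_div_iff₀ hpos).mp (hlac k hk)

lemma pow_mul_le (hlac : IsLacunary q m) (hq : 1 < q) {i : ℕ} (hi : 1 ≤ i) :
    ∀ n, q ^ n * m i ≤ m (i + n)
  | 0 => by simp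
  | n + 1 => calc
      q ^ (n + 1) * m i = q * (q ^ n * m i) := by ring
      _ ≤ q * m (i + n) := by gcongr; exact hlac.pow_mul_le hq hi n
      _ ≤ m (i + (n + 1)) := hlac.mul_le_succ hq (by omega)

lemma monotoneOn (hlac : IsLacunary q m) (hq : 1 < q) : MonotoneOn m (Set.Ici 1) := by
  intro i hi j _ hij
  obtain ⟨n, rfl⟩ := Nat.exists_eq_add_of_le hij
  have : (m i : ℝ) ≤ m (i + n) :=
    (le_mul_of_one_le_left (Nat.cast_nonneg _) (one_le_pow₀ hq.le)).trans
      (hlac.pow_mul_le hq hi n)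
  exact_mod_cast this

lemma exists_index_bound (hlac : IsLacunary q m) (hq : 1 < q) (B : ℝ) :
    ∃ N, ∀ j, 1 ≤ j → (m j : ℝ) < B → j < N := by
  obtain ⟨n, hn⟩ := pow_unbounded_of_one_lt B hq
  refine ⟨n + 1, fun j hj hjB => ?_⟩
  by_contra! hnj
  have hm1 : (1 : ℝ) ≤ m 1 := by exact_mod_cast hlac.pos hq le_rfl
  have hgrowth := hlac.pow_mul_le hq le_rfl (j - 1)
  rw [Nat.add_sub_cancel' hj] at hgrowth
  have : q ^ n ≤ q ^ (j - 1) := pow_le_pow_right₀ hq.le (by omega)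
  nlinarith [pow_pos (zero_lt_one.trans hq) (j - 1)]

lemma card_le_floor_logb (hlac : IsLacunary q m) (hq : 1 < q) {r : ℝ} (J : Finset ℕ)
    (hJ : ∀ j ∈ J, 1 ≤ j) (hr : ∀ i ∈ J, ∀ j ∈ J, (m j : ℝ) < r * m i) :
    #J ≤ ⌊Real.logb q r⌋₊ + 1 := by
  rcases J.eq_empty_or_nonempty with rfl | hne
  · simp
  set i := J.min' hne
  have hiJ : i ∈ J := J.min'_mem hne
  have hsub : J ⊆ Icc i (i + ⌊Real.logb q r⌋₊) := by
    intro j hj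
    have hij : i ≤ j := J.min'_le j hj
    have hgrowth := hlac.pow_mul_le hq (hJ i hiJ) (j - i)
    rw [Nat.add_sub_cancel' hij] at hgrowth
    have hmi : (0 : ℝ) < m i := by exact_mod_cast hlac.pos hq (hJ i hiJ)
    have hpow : q ^ (j - i) < r := lt_of_mul_lt_mul_right ((hgrowth.trans_lt (hr i hiJ j hj)))
      hmi.le
    have hlog : ((j - i : ℕ) : ℝ) ≤ Real.logb q r := by
      rw [Real.le_logb_iff_rpow_le hq ((pow_pos (zero_lt_one.trans hq) _).trans hpow),
        Real.rpow_natCast]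
      exact hpow.le
    have := Nat.le_floor hlog
    rw [mem_Icc]
    omega
  have := card_le_card hsub
  rw [Nat.card_Icc] at this
  omega

lemma abs_tail_le (hlac : IsLacunary q m) (hq : 1 < q) {n : ℕ} {k : ℕ → ℕ} {ε : ℕ → ℤ}
    (hdec : ∀ i j, i < j → j < n + 1 → k j < k i)
    (hk : ∀ i, i < n + 1 → 1 ≤ k i) (hε : ∀ i, i < n + 1 → ε i = 1 ∨ ε i = -1) :
    |∑ i ∈ range (n + 1), ε i * (m (k i) : ℤ) - ε 0 * m (k 0)| ≤ n * m (k 1) := by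
  refine abs_sum_range_succ_sub_le _ n _ fun i hi => ?_
  have hle : k (i + 1) ≤ k 1 := by
    rcases Nat.eq_zero_or_pos i with rfl | _
    · rfl
    · exact (hdec 1 (i + 1) (by omega) (by omega)).le
  have hmono := hlac.monotoneOn hq (hk (i + 1) (by omega)) (hk 1 (by omega)) hle
  rcases hε (i + 1) (by omega) with h | h <;> simpa [h] using hmono

lemma leading_term_bounds (hlac : IsLacunary q m) (hq : 1 < q) {l : ℕ} (hl : 2 ≤ l)
    {A : ℤ} {k : ℕ → ℕ} {ε : ℕ → ℤ} (hdec : ∀ i j, i < j → j < l → k j < k i)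
    (hk : ∀ i, i < l → 1 ≤ k i) (hε : ∀ i, i < l → ε i = 1 ∨ ε i = -1) (hε0 : ε 0 = 1)
    (hsum : ∑ i ∈ range l, ε i * (m (k i) : ℤ) = A) (hratio : (l : ℝ) * m (k 1) < m (k 0)) :
    (m (k 0) : ℝ) / l < A ∧ (A : ℝ) < 2 * m (k 0) := by
  obtain ⟨n, rfl⟩ : ∃ n, l = n + 1 := ⟨l - 1, by omega⟩
  have htail := hlac.abs_tail_le hq hdec hk hε
  rw [hsum, hε0, one_mul] at htail
  refine div_lt_and_lt_two_mul_of_abs_sub_le (by exact_mod_cast hl) (Nat.cast_nonneg _) ?_ hratio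
  push_cast
  rw [add_sub_cancel_right]
  exact_mod_cast htail

end IsLacunary

theorem solution_leading_term_bounds_general (q : ℝ) (hq : 1 < q) (m : ℕ → ℕ)
    (hlac : ∀ k, 1 ≤ k → (m (k + 1) : ℝ) / (m k : ℝ) ≥ q)
    (l : ℕ) (hl : 2 ≤ l) (A : ℤ) :
    (∀ (k : ℕ → ℕ) (ε : ℕ → ℤ),
      (∀ i j, i < j → j < l → k j < k i) → (∀ i, i < l → 1 ≤ k i) →
      (∀ i, i < l → ε i = 1 ∨ ε i = -1) → ε 0 = 1 →
      (∑ i ∈ Finset.range l, ε i * (m (k i) : ℤ)) = A →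
      (l : ℝ) * (m (k 1) : ℝ) < (m (k 0) : ℝ) →
      ((m (k 0) : ℝ) / l < (A : ℝ) ∧ (A : ℝ) < 2 * (m (k 0) : ℝ))) ∧
    (∃ S : Finset ℕ,
      (∀ (k : ℕ → ℕ) (ε : ℕ → ℤ),
        (∀ i j, i < j → j < l → k j < k i) → (∀ i, i < l → 1 ≤ k i) →
        (∀ i, i < l → ε i = 1 ∨ ε i = -1) → ε 0 = 1 →
        (∑ i ∈ Finset.range l, ε i * (m (k i) : ℤ)) = A →
        (l : ℝ) * (m (k 1) : ℝ) < (m (k 0) : ℝ) →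
        m (k 0) ∈ S) ∧
      (S.card : ℝ) ≤ Real.logb q (2 * l) + 1) := by
  replace hlac : IsLacunary q m := hlac
  have hl0 : (0 : ℝ) < l := by positivity
  have hbounds := fun k ε hdec hk hε hε0 hsum hratio =>
    hlac.leading_term_bounds (A := A) hq hl (k := k) (ε := ε) hdec hk hε hε0 hsum hratio
  refine ⟨hbounds, ?_⟩
  obtain ⟨N, hN⟩ := hlac.exists_index_bound hq (l * A)
  set J := (range N).filter fun j => 1 ≤ j ∧ (A : ℝ) / 2 < m j ∧ (m j : ℝ) < l * A
  refine ⟨J.image m, fun k ε hdec hk hε hε0 hsum hratio => ?_, ?_⟩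
  · obtain ⟨hlow, hhigh⟩ := hbounds k ε hdec hk hε hε0 hsum hratio
    have hk0 : 1 ≤ k 0 := hk 0 (by omega)
    have hupper : (m (k 0) : ℝ) < l * A := by rwa [div_lt_iff₀' hl0] at hlow
    refine mem_image_of_mem m (mem_filter.mpr ⟨mem_range.mpr (hN _ hk0 hupper), hk0, ?_, hupper⟩)
    linarith
  · have hratioJ : ∀ i ∈ J, ∀ j ∈ J, (m j : ℝ) < 2 * l * m i := by
      intro i hi j hj
      simp only [J, mem_filter] at hi hj
      nlinarith
    have hcard := hlac.card_le_floor_logb hq J (fun j hj => (mem_filter.mp hj).2.1) hratioJ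
    have hlog := Nat.floor_le (Real.logb_nonneg hq (by norm_cast; omega : (1 : ℝ) ≤ 2 * l))
    calc ((J.image m).card : ℝ) ≤ J.card := by exact_mod_cast card_image_le
      _ ≤ ⌊Real.logb q (2 * l)⌋₊ + 1 := by exact_mod_cast hcard
      _ ≤ Real.logb q (2 * l) + 1 := by linarith

/-- For a lacunary sequence with ratio `q > 1`, `l ≥ 2` and `A ∈ ℤ`: any signed-sum
solution `m (k 0) ± m (k 1) ± ⋯ ± m (k (l-1)) = A` (leading sign `+1`, decreasing indices) with
`m (k 0) / m (k 1) > l` satisfies `m (k 0) / l < A < 2 · m (k 0)`; consequently the set of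
possible values of `m (k 0)` among such solutions is finite with at most `log_q (2l) + 1`
elements. -/
theorem solution_leading_term_bounds (q : ℝ) (hq : 1 < q) (m : ℕ → ℕ)
    (hpos : ∀ k, 1 ≤ k → 0 < m k)
    (hlac : ∀ k, 1 ≤ k → (m (k + 1) : ℝ) / (m k : ℝ) ≥ q)
    (l : ℕ) (hl : 2 ≤ l) (A : ℤ) :
    (∀ (k : ℕ → ℕ) (ε : ℕ → ℤ),
      (∀ i j, i < j → j < l → k j < k i) → (∀ i, i < l → 1 ≤ k i) →
      (∀ i, i < l → ε i = 1 ∨ ε i = -1) → ε 0 = 1 →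
      (∑ i ∈ Finset.range l, ε i * (m (k i) : ℤ)) = A →
      (l : ℝ) * (m (k 1) : ℝ) < (m (k 0) : ℝ) →
      ((m (k 0) : ℝ) / l < (A : ℝ) ∧ (A : ℝ) < 2 * (m (k 0) : ℝ))) ∧
    (∃ S : Finset ℕ,
      (∀ (k : ℕ → ℕ) (ε : ℕ → ℤ),
        (∀ i j, i < j → j < l → k j < k i) → (∀ i, i < l → 1 ≤ k i) →
        (∀ i, i < l → ε i = 1 ∨ ε i = -1) → ε 0 = 1 →
        (∑ i ∈ Finset.range l, ε i * (m (k i) : ℤ)) = A →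
        (l : ℝ) * (m (k 1) : ℝ) < (m (k 0) : ℝ) →
        m (k 0) ∈ S) ∧
      (S.card : ℝ) ≤ Real.logb q (2 * l) + 1) :=
  solution_leading_term_bounds_general q hq m hlac l hl A
end
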